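/- Let ψ₁, …, ψ_n ∈ ℝᵈ and suppose η ∈ ℝᵈ satisfies 1 + ⟨η, ψ_i⟩ > 0 for all i and Σ_{i=1}^n ψ_i / (1 + ⟨η, ψ_i⟩) = 0, and set p_i = 1 / (n (1 + ⟨η, ψ_i⟩)). Then the weights (p_i) maximize the empirical likelihood: for every q ∈ ℝⁿ with q_i ≥ 0 for all i, Σ_{i=1}^n q_i = 1 and Σ_{i=1}^n q_i ψ_i = 0, one has ∏_{i=1}^n q_i ≤ ∏_{i=1}^n p_i (equivalently ∏ n q_i ≤ ∏ n p_i). -/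

import Mathlib

/-!
With `c i = 1 + ⟪η, ψ i⟫`, the ratios `z i = q i / p i = n q i c i` sum to `n`, because
`∑ q i = 1` and `∑ q i ψ i = 0` kill the inner-product part. AM-GM then gives `∏ z i ≤ 1`,
i.e. `∏ q i ≤ ∏ p i`.
-/

open RealInnerProductSpace Finset

theorem Real.prod_le_one_of_sum_eq_card {ι : Type*} [Fintype ι] {z : ι → ℝ}
    (hz : ∀ i, 0 ≤ z i) (hsum : ∑ i, z i = Fintype.card ι) : ∏ i, z i ≤ 1 := by
  rcases isEmpty_or_nonempty ι with hι | hι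
  · simp
  have hcard : (0 : ℝ) < Fintype.card ι := by exact_mod_cast Fintype.card_pos
  have amgm := Real.geom_mean_le_arith_mean univ (fun _ ↦ 1) z (fun _ _ ↦ zero_le_one)
    (by simpa using hcard) (fun i _ ↦ hz i)
  simp only [Real.rpow_one, sum_const, card_univ, nsmul_eq_mul, mul_one, one_mul, hsum,
    div_self hcard.ne'] at amgm
  simpa using (Real.rpow_inv_le_iff_of_pos (prod_nonneg fun i _ ↦ hz i) zero_le_one hcard).1 amgm

theorem prod_le_prod_of_sum_div_eq_card {ι : Type*} [Fintype ι] {p q : ι → ℝ}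
    (hp : ∀ i, 0 < p i) (hq : ∀ i, 0 ≤ q i) (hsum : ∑ i, q i / p i = Fintype.card ι) :
    ∏ i, q i ≤ ∏ i, p i := by
  have hratio : ∏ i, q i / p i ≤ 1 :=
    Real.prod_le_one_of_sum_eq_card (fun i ↦ div_nonneg (hq i) (hp i).le) hsum
  rwa [prod_div_distrib, div_le_one (prod_pos fun i _ ↦ hp i)] at hratio

theorem sum_mul_one_add_inner_eq_one {ι E : Type*} [Fintype ι] [NormedAddCommGroup E]
    [InnerProductSpace ℝ E] {ψ : ι → E} (η : E) {q : ι → ℝ} (hq1 : ∑ i, q i = 1)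
    (hqψ : ∑ i, q i • ψ i = 0) : ∑ i, q i * (1 + ⟪η, ψ i⟫) = 1 := by
  have hinner : ∑ i, q i * ⟪η, ψ i⟫ = 0 := by
    simpa [inner_sum, real_inner_smul_right] using congrArg (⟪η, ·⟫) hqψ
  simp only [mul_add, mul_one, sum_add_distrib, hq1, hinner, add_zero]

theorem stmt_4_general {n d : ℕ}
    (ψ : Fin n → EuclideanSpace ℝ (Fin d)) (η : EuclideanSpace ℝ (Fin d))
    (hpos : ∀ i, 0 < 1 + ⟪η, ψ i⟫)
    (p : Fin n → ℝ) (hp : ∀ i, p i = ((n : ℝ) * (1 + ⟪η, ψ i⟫))⁻¹)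
    (q : Fin n → ℝ) (hq0 : ∀ i, 0 ≤ q i) (hq1 : ∑ i, q i = 1)
    (hqψ : ∑ i, q i • ψ i = 0) :
    ∏ i, q i ≤ ∏ i, p i := by
  have hn : (0 : ℝ) < n := by
    rcases Nat.eq_zero_or_pos n with rfl | hn
    · simp at hq1
    · exact_mod_cast hn
  have hp_pos : ∀ i, 0 < p i := fun i ↦ by rw [hp i]; exact inv_pos.2 (mul_pos hn (hpos i))
  refine prod_le_prod_of_sum_div_eq_card hp_pos hq0 ?_
  calc ∑ i, q i / p i = n * ∑ i, q i * (1 + ⟪η, ψ i⟫) := by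
        rw [mul_sum]; exact sum_congr rfl fun i _ ↦ by rw [hp i, div_inv_eq_mul]; ring
    _ = Fintype.card (Fin n) := by
        rw [sum_mul_one_add_inner_eq_one η hq1 hqψ, mul_one, Fintype.card_fin]

/-- The Lagrangian empirical likelihood weights
`p i = 1 / (n (1 + ⟨η, ψ i⟩))` maximize the empirical likelihood: any weights `q`
with `q i ≥ 0`, `∑ q i = 1` and `∑ q i • ψ i = 0` satisfy `∏ q i ≤ ∏ p i`. -/
theorem stmt_4 {n d : ℕ}
    (ψ : Fin n → EuclideanSpace ℝ (Fin d)) (η : EuclideanSpace ℝ (Fin d))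
    (hpos : ∀ i, 0 < 1 + ⟪η, ψ i⟫)
    (hlag : ∑ i, (1 + ⟪η, ψ i⟫)⁻¹ • ψ i = 0)
    (p : Fin n → ℝ) (hp : ∀ i, p i = ((n : ℝ) * (1 + ⟪η, ψ i⟫))⁻¹)
    (q : Fin n → ℝ) (hq0 : ∀ i, 0 ≤ q i) (hq1 : ∑ i, q i = 1)
    (hqψ : ∑ i, q i • ψ i = 0) :
    ∏ i, q i ≤ ∏ i, p i :=
  stmt_4_general ψ η hpos p hp q hq0 hq1 hqψ
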